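/- Let f : ℝ^d → ℝ be convex and continuously differentiable with f(0) = 0 = min f. Let X : [0,∞) → ℝ^d be continuous, twice continuously differentiable on (0,∞), with X(0) = X₀ and Ẋ(t) → 0 as t → 0⁺, satisfying Ẍ(t) + (3/t)·Ẋ(t) + ∇f(X(t)) = 0 for all t > 0. If X is bounded on [0,∞) (in particular if X(t) → 0 as t → ∞), then there exists a constant C_v > 0 such that t·‖Ẋ(t)‖ ≤ C_v for all t > 0. -/

import Mathlib

/-!
Along the flow the energy `E(t) = t² f(X t) + ‖2 X t + t Ẋ t‖² / 2` has derivative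
`2 t (f(X t) - ⟪∇f(X t), X t⟫)`, which is `≤ 0` because convexity and `f 0 = 0` give
`f x ≤ ⟪∇f x, x⟫`. Hence `E(t) ≤ E(0⁺) = ‖2 X 0‖² / 2`, and since `f ≥ 0` this bounds
`‖2 X t + t Ẋ t‖` by `2 ‖X 0‖`; the triangle inequality and the bound on `X` then bound `t ‖Ẋ t‖`.
-/

open RealInnerProductSpace Filter Topology Set

theorem ConvexOn.add_le_of_hasFDerivAt {E : Type*} [NormedAddCommGroup E] [NormedSpace ℝ E]
    {s : Set E} {f : E → ℝ} {f' : E →L[ℝ] ℝ} {x y : E} (hf : ConvexOn ℝ s f)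
    (hx : x ∈ s) (hy : y ∈ s) (hf' : HasFDerivAt f f' x) : f x + f' (y - x) ≤ f y := by
  let L := AffineMap.lineMap (k := ℝ) x y
  have hL0 : L 0 = x := AffineMap.lineMap_apply_zero x y
  have hL1 : L 1 = y := AffineMap.lineMap_apply_one x y
  have hL : HasDerivAt L (y - x) 0 := by
    convert ((hasDerivAt_id (0 : ℝ)).smul_const (y - x)).add_const x using 1
    · ext s
      exact AffineMap.lineMap_apply_module' x y s
    · rw [one_smul]
  rw [← hL0] at hf'
  have hslope := (hf.comp_affineMap L).le_slope_of_hasDerivAt (x := 0) (y := 1)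
    (by simpa [hL0] using hx) (by simpa [hL1] using hy) one_pos (hf'.comp_hasDerivAt 0 hL)
  rw [slope_def_field] at hslope
  simp only [Function.comp_apply, hL0, hL1, sub_zero, div_one] at hslope
  linarith

theorem ConvexOn.le_inner_gradient_self {F : Type*} [NormedAddCommGroup F]
    [InnerProductSpace ℝ F] [CompleteSpace F] {s : Set F} {f : F → ℝ} {x : F}
    (hf : ConvexOn ℝ s f) (h0 : (0 : F) ∈ s) (hf0 : f 0 ≤ 0) (hx : x ∈ s)
    (hfx : DifferentiableAt ℝ f x) : f x ≤ ⟪gradient f x, x⟫ := by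
  have := hf.add_le_of_hasFDerivAt hx h0 hfx.hasGradientAt.hasFDerivAt
  rw [InnerProductSpace.toDual_apply_apply, zero_sub, inner_neg_right] at this
  linarith

theorem AntitoneOn.le_of_tendsto_nhdsGT {g : ℝ → ℝ} {a L : ℝ} (hg : AntitoneOn g (Ioi a))
    (hlim : Tendsto g (𝓝[>] a) (𝓝 L)) ⦃t : ℝ⦄ (ht : a < t) : g t ≤ L :=
  ge_of_tendsto hlim <| by
    filter_upwards [Ioo_mem_nhdsGT ht] with s hs
    exact hg hs.1 (lt_trans hs.1 hs.2) hs.2.le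

section NesterovFlow

variable {E : Type*} [NormedAddCommGroup E] [InnerProductSpace ℝ E]
  {f : E → ℝ} {X X' X'' : ℝ → E}

noncomputable def nesterovEnergy (f : E → ℝ) (X X' : ℝ → E) (t : ℝ) : ℝ :=
  t ^ 2 * f (X t) + ‖(2 : ℝ) • X t + t • X' t‖ ^ 2 / 2

theorem hasDerivAt_nesterovEnergy [CompleteSpace E] {t : ℝ} (ht : t ≠ 0)
    (hfX : DifferentiableAt ℝ f (X t))
    (hX : HasDerivAt X (X' t) t) (hX' : HasDerivAt X' (X'' t) t)
    (hODE : X'' t + (3 / t) • X' t + gradient f (X t) = 0) :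
    HasDerivAt (nesterovEnergy f X X') (2 * t * (f (X t) - ⟪gradient f (X t), X t⟫)) t := by
  have hfX' : HasDerivAt (fun s ↦ f (X s)) ⟪gradient f (X t), X' t⟫ t :=
    hfX.hasGradientAt.hasFDerivAt.comp_hasDerivAt t hX
  -- the ODE says exactly that `2 X + t X'` has derivative `3 X' + t X'' = -t ∇f(X)`
  have hv : HasDerivAt (fun s ↦ (2 : ℝ) • X s + s • X' s) (-(t • gradient f (X t))) t := by
    refine ((hX.const_smul (2 : ℝ)).add ((hasDerivAt_id' t).smul hX')).congr_deriv ?_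
    have h := congrArg (t • ·) hODE
    simp only [smul_add, smul_smul, mul_div_cancel₀ _ ht, smul_zero] at h
    linear_combination (norm := module) h
  refine (((hasDerivAt_pow 2 t).mul hfX').add (hv.norm_sq.div_const 2)).congr_deriv ?_
  simp only [inner_add_left, inner_neg_right, real_inner_smul_left, real_inner_smul_right,
    real_inner_comm (X t), real_inner_comm (X' t)]
  push_cast
  ring

theorem antitoneOn_nesterovEnergy [CompleteSpace E] (hf : ConvexOn ℝ univ f) (hf0 : f 0 ≤ 0)
    (hfd : Differentiable ℝ f) (hX : ∀ t > 0, HasDerivAt X (X' t) t)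
    (hX' : ∀ t > 0, HasDerivAt X' (X'' t) t)
    (hODE : ∀ t > 0, X'' t + (3 / t) • X' t + gradient f (X t) = 0) :
    AntitoneOn (nesterovEnergy f X X') (Ioi 0) := by
  have hE : ∀ t ∈ Ioi (0 : ℝ), HasDerivAt (nesterovEnergy f X X')
      (2 * t * (f (X t) - ⟪gradient f (X t), X t⟫)) t := fun t ht ↦
    hasDerivAt_nesterovEnergy ht.ne' (hfd _) (hX t ht) (hX' t ht) (hODE t ht)
  refine antitoneOn_of_hasDerivWithinAt_nonpos (convex_Ioi 0)
    (fun t ht ↦ (hE t ht).continuousAt.continuousWithinAt)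
    (fun t ht ↦ (hE t (interior_subset ht)).hasDerivWithinAt) fun t ht ↦ ?_
  rw [interior_Ioi] at ht
  have := hf.le_inner_gradient_self (mem_univ 0) hf0 (mem_univ (X t)) (hfd _)
  exact mul_nonpos_of_nonneg_of_nonpos (mul_nonneg zero_le_two ht.le) (by linarith)

theorem tendsto_nesterovEnergy_nhdsGT_zero (hf : ContinuousAt f (X 0))
    (hX : ContinuousWithinAt X (Ioi 0) 0) (hX' : Tendsto X' (𝓝[>] 0) (𝓝 0)) :
    Tendsto (nesterovEnergy f X X') (𝓝[>] 0) (𝓝 (‖(2 : ℝ) • X 0‖ ^ 2 / 2)) := by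
  unfold nesterovEnergy
  have ht : Tendsto (fun t : ℝ ↦ t) (𝓝[>] 0) (𝓝 0) := nhdsWithin_le_nhds
  have := ((ht.pow 2).mul (hf.tendsto.comp hX)).add
    ((((hX.tendsto.const_smul (2 : ℝ)).add (ht.smul hX')).norm.pow 2).div_const 2)
  simpa using this

end NesterovFlow

theorem nesterov_velocity_bound_general (d : ℕ)
    (f : EuclideanSpace ℝ (Fin d) → ℝ)
    (hconv : ConvexOn ℝ Set.univ f) (hf : ContDiff ℝ 1 f)
    (hf0 : f 0 = 0) (hmin : ∀ x, 0 ≤ f x)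
    (X X' X'' : ℝ → EuclideanSpace ℝ (Fin d))
    (hXcont : ContinuousOn X (Set.Ici 0))
    (hX' : ∀ t > (0:ℝ), HasDerivAt X (X' t) t)
    (hX'' : ∀ t > (0:ℝ), HasDerivAt X' (X'' t) t)
    (hX'0 : Filter.Tendsto X' (nhdsWithin 0 (Set.Ioi 0)) (nhds 0))
    (hODE : ∀ t > (0:ℝ), X'' t + (3 / t) • X' t + gradient f (X t) = 0)
    (hbdd : ∃ B : ℝ, ∀ t ≥ (0:ℝ), ‖X t‖ ≤ B) :
    ∃ Cv > (0:ℝ), ∀ t > (0:ℝ), t * ‖X' t‖ ≤ Cv := by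
  obtain ⟨B, hB⟩ := hbdd
  have hE := (antitoneOn_nesterovEnergy hconv hf0.le (hf.differentiable one_ne_zero) hX' hX''
    hODE).le_of_tendsto_nhdsGT <| tendsto_nesterovEnergy_nhdsGT_zero hf.continuous.continuousAt
      ((hXcont 0 self_mem_Ici).mono Ioi_subset_Ici_self) hX'0
  have hB0 : 0 ≤ B := (norm_nonneg _).trans (hB 0 le_rfl)
  refine ⟨2 * ‖X 0‖ + 2 * B + 1, by positivity, fun t ht ↦ ?_⟩
  have hv : ‖(2 : ℝ) • X t + t • X' t‖ ≤ ‖(2 : ℝ) • X 0‖ := by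
    have hEt := hE ht
    have hpot := mul_nonneg (sq_nonneg t) (hmin (X t))
    rw [nesterovEnergy] at hEt
    exact (pow_le_pow_iff_left₀ (norm_nonneg _) (norm_nonneg _) two_ne_zero).1 (by linarith)
  calc t * ‖X' t‖ = ‖((2 : ℝ) • X t + t • X' t) - (2 : ℝ) • X t‖ := by
        rw [add_sub_cancel_left, norm_smul, Real.norm_of_nonneg ht.le]
    _ ≤ ‖(2 : ℝ) • X 0‖ + ‖(2 : ℝ) • X t‖ := (norm_sub_le _ _).trans (by gcongr)
    _ ≤ 2 * ‖X 0‖ + 2 * B + 1 := by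
        simp only [norm_smul, Real.norm_ofNat]
        linarith [hB t ht.le]

/-- along a bounded solution of the critical Nesterov flow for a convex
`C¹` potential `f` with `f(0) = 0 = min f`, there is `C_v > 0` with
`t·‖Ẋ(t)‖ ≤ C_v` for all `t > 0`. -/
theorem nesterov_velocity_bound (d : ℕ)
    (f : EuclideanSpace ℝ (Fin d) → ℝ)
    (hconv : ConvexOn ℝ Set.univ f) (hf : ContDiff ℝ 1 f)
    (hf0 : f 0 = 0) (hmin : ∀ x, 0 ≤ f x)
    (X₀ : EuclideanSpace ℝ (Fin d)) (X X' X'' : ℝ → EuclideanSpace ℝ (Fin d))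
    (hXcont : ContinuousOn X (Set.Ici 0))
    (hX' : ∀ t > (0:ℝ), HasDerivAt X (X' t) t)
    (hX'' : ∀ t > (0:ℝ), HasDerivAt X' (X'' t) t)
    (hX''cont : ContinuousOn X'' (Set.Ioi 0))
    (hX0 : X 0 = X₀)
    (hX'0 : Filter.Tendsto X' (nhdsWithin 0 (Set.Ioi 0)) (nhds 0))
    (hODE : ∀ t > (0:ℝ), X'' t + (3 / t) • X' t + gradient f (X t) = 0)
    (hbdd : ∃ B : ℝ, ∀ t ≥ (0:ℝ), ‖X t‖ ≤ B) :
    ∃ Cv > (0:ℝ), ∀ t > (0:ℝ), t * ‖X' t‖ ≤ Cv :=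
  nesterov_velocity_bound_general d f hconv hf hf0 hmin X X' X'' hXcont hX' hX'' hX'0 hODE hbdd
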